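/- Neither of the families Σ_gvs and Σ_local dominates the other: there exist a finite instance set X, a finite hypothesis class H of functions X → Bool, and an initial hypothesis h0 ∈ H such that Σ_gvs-TD_{X,H,h0} < Σ_local-TD_{X,H,h0}, and there exist (possibly different) X, H, h0 such that Σ_local-TD_{X,H,h0} < Σ_gvs-TD_{X,H,h0}. -/

import Mathlib

open scoped Classical

/-- A preference function `σ(h'; H', h)`: `h'` is a candidate hypothesis, `H'` the current
version space, `h` the learner's current hypothesis. -/
abbrev Pref (X : Type) : Type := (X → Bool) → Finset (X → Bool) → (X → Bool) → ℝ

variable {X : Type}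

/-- `h` is consistent with the labeled examples in `S`. -/
def ConsistentWith (h : X → Bool) (S : Finset (X × Bool)) : Prop := ∀ z ∈ S, h z.1 = z.2

/-- Version space of `H'` induced by the labeled examples `S`. -/
noncomputable def verSpace (H' : Finset (X → Bool)) (S : Finset (X × Bool)) :
    Finset (X → Bool) :=
  H'.filter fun h => ∀ z ∈ S, h z.1 = z.2

/-- The set of hypotheses in `H'` most preferred by `σ` given current hypothesis `h`. -/
noncomputable def argminSet (σ : Pref X) (H' : Finset (X → Bool)) (h : X → Bool) :
    Finset (X → Bool) :=
  H'.filter fun h' => ∀ h'' ∈ H', σ h' H' h ≤ σ h'' H' h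

/-- `C_σ(H', h, z)`: the candidate hypotheses most preferred by the learner after
receiving the labeled example `z`. -/
noncomputable def Cand (σ : Pref X) (H' : Finset (X → Bool)) (h : X → Bool) (z : X × Bool) :
    Finset (X → Bool) :=
  argminSet σ (verSpace H' {z}) h

/-- `Dle σ n H' h h*` means the worst-case teaching cost `D_σ(H', h, h*) ≤ n`. -/
def Dle (σ : Pref X) : ℕ → Finset (X → Bool) → (X → Bool) → (X → Bool) → Prop
  | 0, _, _, _ => False
  | n + 1, H', h, hstar =>
      (∃ z : X × Bool, hstar z.1 = z.2 ∧ Cand σ H' h z = {hstar}) ∨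
      (∃ z : X × Bool, hstar z.1 = z.2 ∧
        ∀ h'' ∈ Cand σ H' h z, Dle σ n (verSpace H' {z}) h'' hstar)

/-- The worst-case teaching cost `D_σ(H', h, h*)` (∞ when teaching is impossible). -/
noncomputable def Dval (σ : Pref X) (H' : Finset (X → Bool)) (h hstar : X → Bool) : ℕ∞ :=
  sInf {n : ℕ∞ | ∃ m : ℕ, n = (m : ℕ∞) ∧ Dle σ m H' h hstar}

/-- Teaching dimension `TD_{X,H,h0}(σ) = max_{h* ∈ H} D_σ(H, h0, h*)`. -/
noncomputable def TDpref (Hc : Finset (X → Bool)) (h0 : X → Bool) (σ : Pref X) : ℕ∞ :=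
  ⨆ hstar ∈ Hc, Dval σ Hc h0 hstar

/-- Teaching dimension of a family of preference functions: `Σ-TD = min_{σ ∈ Σ} TD(σ)`. -/
noncomputable def famTD (Hc : Finset (X → Bool)) (h0 : X → Bool) (F : Set (Pref X)) : ℕ∞ :=
  ⨅ σ ∈ F, TDpref Hc h0 σ

/-- A preference function is collusion-free. -/
def CollusionFree (Hc : Finset (X → Bool)) (σ : Pref X) : Prop :=
  ∀ h ∈ Hc, ∀ H' ⊆ Hc, ∀ hhat : X → Bool,
    argminSet σ H' h = {hhat} →
    ∀ S : Finset (X × Bool), ConsistentWith hhat S →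
      argminSet σ (verSpace H' S) hhat = {hhat}

/-- `Σ_const`: collusion-free constant preference functions. -/
def SigmaConst (Hc : Finset (X → Bool)) : Set (Pref X) :=
  {σ | CollusionFree Hc σ ∧ ∃ c : ℝ, ∀ h' H' h, σ h' H' h = c}

/-- `Σ_global`: collusion-free preference functions of the form `g(h')`. -/
def SigmaGlobal (Hc : Finset (X → Bool)) : Set (Pref X) :=
  {σ | CollusionFree Hc σ ∧ ∃ g : (X → Bool) → ℝ, ∀ h' H' h, σ h' H' h = g h'}

/-- `Σ_gvs`: collusion-free preference functions of the form `g(h', H')`. -/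
def SigmaGVS (Hc : Finset (X → Bool)) : Set (Pref X) :=
  {σ | CollusionFree Hc σ ∧
    ∃ g : (X → Bool) → Finset (X → Bool) → ℝ, ∀ h' H' h, σ h' H' h = g h' H'}

/-- `Σ_local`: collusion-free preference functions of the form `g(h', h)`. -/
def SigmaLocal (Hc : Finset (X → Bool)) : Set (Pref X) :=
  {σ | CollusionFree Hc σ ∧ ∃ g : (X → Bool) → (X → Bool) → ℝ, ∀ h' H' h, σ h' H' h = g h' h}

/-- `Σ_lvs`: all collusion-free preference functions. -/
def SigmaLVS (Hc : Finset (X → Bool)) : Set (Pref X) := {σ | CollusionFree Hc σ}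

/-- `T` is a teaching set for `h` w.r.t. the subclass `Hc`. -/
def IsTeachingSet (Hc : Finset (X → Bool)) (h : X → Bool) (T : Finset X) : Prop :=
  ∀ h' ∈ Hc, (∀ x ∈ T, h' x = h x) → h' = h

/-- Size of the minimum teaching set of `h` w.r.t. `Hc`. -/
noncomputable def minTSsize (Hc : Finset (X → Bool)) (h : X → Bool) : ℕ :=
  sInf {k | ∃ T : Finset X, T.card = k ∧ IsTeachingSet Hc h T}

/-- The classical (worst-case) teaching dimension `TD(H)`. -/
noncomputable def TDclassic (Hc : Finset (X → Bool)) : ℕ :=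
  Hc.sup (minTSsize Hc)

/-- Witness for `RTD(H) ≤ k`: an ordering of `H` where each hypothesis has a teaching
set of size at most `k` w.r.t. the remaining hypotheses. -/
def RTDwitness (Hc : Finset (X → Bool)) (k : ℕ) : Prop :=
  ∃ L : List (X → Bool), L.Nodup ∧ L.toFinset = Hc ∧
    ∀ (i : ℕ) (hi : i < L.length), ∃ T : Finset X, T.card ≤ k ∧
      IsTeachingSet (L.drop i).toFinset (L.get ⟨i, hi⟩) T

/-- The recursive teaching dimension `RTD(H)`. -/
noncomputable def RTD (Hc : Finset (X → Bool)) : ℕ := sInf {k | RTDwitness Hc k}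

/-- A teacher mapping is non-clashing on `Hc`. -/
def NonClashing (Hc : Finset (X → Bool)) (T : (X → Bool) → Finset X) : Prop :=
  ∀ h ∈ Hc, ∀ h' ∈ Hc, h ≠ h' →
    ¬ ((∀ x ∈ T h, h' x = h x) ∧ (∀ x ∈ T h', h x = h' x))

/-- The non-clashing teaching dimension `NCTD(H)`. -/
noncomputable def NCTD (Hc : Finset (X → Bool)) : ℕ :=
  sInf {k | ∃ T : (X → Bool) → Finset X, NonClashing Hc T ∧ ∀ h ∈ Hc, (T h).card ≤ k}

/-- `Hc` shatters the set of instances `X'`. -/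
def Shatters (Hc : Finset (X → Bool)) (X' : Finset X) : Prop :=
  ∀ b : X → Bool, ∃ h ∈ Hc, ∀ x ∈ X', h x = b x

/-- The VC dimension `VCD(H, X)`. -/
noncomputable def VCD (Hc : Finset (X → Bool)) : ℕ :=
  sSup {k | ∃ X' : Finset X, X'.card = k ∧ Shatters Hc X'}

/-!
Over a two-point domain every version space `H({z})` has exactly two members. A gvs learner may
pick a different member in each of them, and matching the four hypotheses with the four examples
teaches everything with one example; a local learner at `h0` uses one ranking for all of them, and
the hypothesis it ranks last is never its unique choice, so that one needs a second example.

On the 5-cube, a collusion-free gvs learner teaching everything with two examples would give every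
hypothesis a set of at most two instances, and collusion-freeness forbids two distinct hypotheses
each consistent with the other's examples. Hence each of the `5 * 32` pairs `(h, i)` has `i` in
the set of `h` or in that of `h` flipped at `i`; but the sets have at most `2 * 32` members in
all, and each membership serves only two pairs. A local learner instead keeps its hypothesis while
it stays consistent and reads the second example relative to where the first one led; suitable
rankings make two examples enough for all 32 hypotheses.
-/

section VersionSpace

variable {X : Type}

@[simp]
lemma mem_verSpace {H' : Finset (X → Bool)} {S : Finset (X × Bool)} {h : X → Bool} :
    h ∈ verSpace H' S ↔ h ∈ H' ∧ ConsistentWith h S :=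
  Finset.mem_filter

lemma verSpace_subset (H' : Finset (X → Bool)) (S : Finset (X × Bool)) :
    verSpace H' S ⊆ H' :=
  Finset.filter_subset _ _

lemma verSpace_verSpace (H' : Finset (X → Bool)) (S T : Finset (X × Bool)) :
    verSpace (verSpace H' S) T = verSpace H' (S ∪ T) := by
  ext h
  simp only [mem_verSpace, ConsistentWith, Finset.forall_mem_union, and_assoc]

lemma verSpace_comm (H' : Finset (X → Bool)) (S T : Finset (X × Bool)) :
    verSpace (verSpace H' S) T = verSpace (verSpace H' T) S := by
  rw [verSpace_verSpace, verSpace_verSpace, Finset.union_comm]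

lemma mem_argminSet {σ : Pref X} {H' : Finset (X → Bool)} {h h' : X → Bool} :
    h' ∈ argminSet σ H' h ↔ h' ∈ H' ∧ ∀ h'' ∈ H', σ h' H' h ≤ σ h'' H' h :=
  Finset.mem_filter

lemma argminSet_nonempty {σ : Pref X} {H' : Finset (X → Bool)} (hH' : H'.Nonempty)
    (h : X → Bool) : (argminSet σ H' h).Nonempty := by
  obtain ⟨a, ha, hmin⟩ := H'.exists_min_image (fun h' => σ h' H' h) hH'
  exact ⟨a, mem_argminSet.2 ⟨ha, hmin⟩⟩

lemma argminSet_eq_singleton_iff {σ : Pref X} {H' : Finset (X → Bool)} {h a : X → Bool} :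
    argminSet σ H' h = {a} ↔ a ∈ H' ∧ ∀ b ∈ H', b ≠ a → σ a H' h < σ b H' h := by
  constructor
  · intro ha
    have hmem : a ∈ argminSet σ H' h := ha ▸ Finset.mem_singleton_self a
    refine ⟨(mem_argminSet.1 hmem).1, fun b hb hba => ?_⟩
    have hb' : b ∉ argminSet σ H' h := by simpa [ha] using hba
    obtain ⟨c, hc, hcb⟩ : ∃ c ∈ H', σ c H' h < σ b H' h := by
      simpa [mem_argminSet, hb] using hb'
    exact ((mem_argminSet.1 hmem).2 c hc).trans_lt hcb
  · rintro ⟨ha, hlt⟩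
    ext b
    simp only [mem_argminSet, Finset.mem_singleton]
    constructor
    · rintro ⟨hb, hmin⟩
      by_contra hba
      exact (hmin a ha).not_gt (hlt b hb hba)
    · rintro rfl
      refine ⟨ha, fun c hc => ?_⟩
      rcases eq_or_ne c b with rfl | hcb
      · exact le_rfl
      · exact (hlt c hc hcb).le

def natPref (g : (X → Bool) → Finset (X → Bool) → (X → Bool) → ℕ) : Pref X :=
  fun h' H' h => g h' H' h

lemma argminSet_natPref (g : (X → Bool) → Finset (X → Bool) → (X → Bool) → ℕ)
    (H' : Finset (X → Bool)) (h : X → Bool) :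
    argminSet (natPref g) H' h = H'.filter fun h' => ∀ h'' ∈ H', g h' H' h ≤ g h'' H' h := by
  ext h'
  simp only [mem_argminSet, Finset.mem_filter, natPref, Nat.cast_le]

end VersionSpace

section TeachingCost

variable {X : Type}

lemma Dle.mono {σ : Pref X} {m n : ℕ} (hmn : m ≤ n) {H' : Finset (X → Bool)}
    {h t : X → Bool} (hm : Dle σ m H' h t) : Dle σ n H' h t := by
  induction n generalizing m H' h with
  | zero => rwa [Nat.le_zero.1 hmn] at hm
  | succ n ih =>
    match m, hm with
    | m + 1, .inl hz => exact .inl hz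
    | m + 1, .inr ⟨z, hz, hnext⟩ =>
      exact .inr ⟨z, hz, fun h'' hh'' => ih (by omega) (hnext h'' hh'')⟩

lemma Dval_le_iff {σ : Pref X} {H' : Finset (X → Bool)} {h t : X → Bool} {n : ℕ} :
    Dval σ H' h t ≤ n ↔ Dle σ n H' h t := by
  refine ⟨fun hle => ?_, fun hn => sInf_le ⟨n, rfl, hn⟩⟩
  by_contra hn
  have hlt : ((n + 1 : ℕ) : ℕ∞) ≤ Dval σ H' h t := by
    refine le_sInf ?_
    rintro _ ⟨m, rfl, hm⟩
    by_contra hmn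
    exact hn (hm.mono (by norm_cast at hmn; omega))
  exact absurd (hlt.trans hle) (by norm_cast; omega)

lemma TDpref_le_iff {Hc : Finset (X → Bool)} {h0 : X → Bool} {σ : Pref X} {n : ℕ} :
    TDpref Hc h0 σ ≤ n ↔ ∀ t ∈ Hc, Dle σ n Hc h0 t := by
  simp only [TDpref, iSup₂_le_iff, Dval_le_iff]

lemma famTD_le_of_mem {Hc : Finset (X → Bool)} {h0 : X → Bool} {F : Set (Pref X)}
    {σ : Pref X} (hσ : σ ∈ F) {n : ℕ} (hteach : ∀ t ∈ Hc, Dle σ n Hc h0 t) :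
    famTD Hc h0 F ≤ n :=
  (iInf₂_le σ hσ).trans (TDpref_le_iff.2 hteach)

lemma add_one_le_famTD {Hc : Finset (X → Bool)} {h0 : X → Bool} {F : Set (Pref X)} {n : ℕ}
    (hhard : ∀ σ ∈ F, ∃ t ∈ Hc, ¬ Dle σ n Hc h0 t) :
    (n + 1 : ℕ∞) ≤ famTD Hc h0 F := by
  refine le_iInf₂ fun σ hσ => ?_
  obtain ⟨t, ht, hn⟩ := hhard σ hσ
  exact Order.add_one_le_of_lt (not_le.1 fun hle => hn (TDpref_le_iff.1 hle t ht))

lemma Dle.exists_examples {σ : Pref X} {n : ℕ} {H' : Finset (X → Bool)}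
    {h t : X → Bool} (hD : Dle σ n H' h t) (ht : t ∈ H') :
    ∃ S : Finset (X × Bool), S.card ≤ n ∧ ConsistentWith t S ∧
      ∃ c, argminSet σ (verSpace H' S) c = {t} := by
  induction n generalizing H' h with
  | zero => exact hD.elim
  | succ n ih =>
    rcases hD with ⟨z, hz, hC⟩ | ⟨z, hz, hnext⟩
    · exact ⟨{z}, by simp, by simpa [ConsistentWith] using hz, h, hC⟩
    · have htz : t ∈ verSpace H' {z} := by simpa [ConsistentWith, ht] using hz
      obtain ⟨c, hc⟩ := argminSet_nonempty ⟨t, htz⟩ h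
      obtain ⟨S, hS, htS, c', hc'⟩ := ih (hnext c hc) htz
      refine ⟨insert z S, (Finset.card_insert_le z S).trans (by omega), ?_, c', ?_⟩
      · simpa [ConsistentWith, Finset.forall_mem_insert] using And.intro hz htS
      · rwa [Finset.insert_eq, ← verSpace_verSpace]

end TeachingCost

section CollusionFree

variable {X : Type} {Hc : Finset (X → Bool)} {σ : Pref X}

lemma argminSet_eq_of_mem_SigmaGVS (hσ : σ ∈ SigmaGVS Hc) (H' : Finset (X → Bool))
    (h h' : X → Bool) : argminSet σ H' h = argminSet σ H' h' := by
  obtain ⟨-, g, hg⟩ := hσ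
  ext
  simp only [mem_argminSet, hg]

lemma eq_of_mem_SigmaGVS_of_consistent (hσ : σ ∈ SigmaGVS Hc) {a b c d : X → Bool}
    {S T : Finset (X × Bool)} (ha : argminSet σ (verSpace Hc S) c = {a})
    (hb : argminSet σ (verSpace Hc T) d = {b}) (haT : ConsistentWith a T)
    (hbS : ConsistentWith b S) : a = b := by
  have hmem : ∀ {e U} {f : X → Bool}, argminSet σ (verSpace Hc U) f = {e} → e ∈ Hc :=
    fun he => verSpace_subset _ _ (mem_argminSet.1 (he ▸ Finset.mem_singleton_self _)).1
  rw [argminSet_eq_of_mem_SigmaGVS hσ _ c a] at ha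
  rw [argminSet_eq_of_mem_SigmaGVS hσ _ d b] at hb
  have hab := hσ.1 a (hmem ha) _ (verSpace_subset _ _) a ha T haT
  have hba := hσ.1 b (hmem hb) _ (verSpace_subset _ _) b hb S hbS
  rw [verSpace_comm, argminSet_eq_of_mem_SigmaGVS hσ _ b a, hab] at hba
  exact Finset.singleton_injective hba

lemma collusionFree_of_local {g : (X → Bool) → (X → Bool) → ℝ}
    (hσ : ∀ h' H' h, σ h' H' h = g h' h)
    (hg : ∀ a h, h ≠ a →
      (∀ b, b ≠ a → g a a < g b a) ∨ (∀ b, b ≠ a → g b h < g a h)) :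
    CollusionFree Hc σ := by
  intro h _ H' _ a ha S haS
  rw [argminSet_eq_singleton_iff] at ha ⊢
  simp only [hσ] at ha ⊢
  obtain ⟨haH', hmin⟩ := ha
  refine ⟨mem_verSpace.2 ⟨haH', haS⟩, ?_⟩
  rcases eq_or_ne h a with rfl | hha
  · exact fun b hb => hmin b (verSpace_subset _ _ hb)
  rcases hg a h hha with hself | hworst
  · exact fun b _ => hself b
  · intro b hb hba
    exact absurd (hmin b (verSpace_subset _ _ hb) hba) (hworst b hba).not_gt

end CollusionFree

section FullClass

lemma exists_notMem_of_two_mul_card_lt {n : ℕ} (T : (Fin n → Bool) → Finset (Fin n))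
    (hT : ∀ h, 2 * (T h).card < n) :
    ∃ h i, i ∉ T h ∧ i ∉ T (Function.update h i (!h i)) := by
  by_contra! hcover
  set flip : (Fin n → Bool) × Fin n → (Fin n → Bool) × Fin n :=
    fun p => (Function.update p.1 p.2 (!p.1 p.2), p.2)
  set A := (Finset.univ : Finset ((Fin n → Bool) × Fin n)).filter fun p => p.2 ∈ T p.1
  have hA : A.card = ∑ h, (T h).card := by
    rw [Finset.card_filter, Fintype.sum_prod_type]
    simp only [Finset.sum_boole]
    simp
  have hcov : Finset.univ ⊆ A ∪ A.image flip := by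
    rintro ⟨h, i⟩ -
    by_cases hi : i ∈ T h
    · exact Finset.mem_union_left _ (by simp [A, hi])
    · refine Finset.mem_union_right _ (Finset.mem_image.2 ⟨flip (h, i), ?_, ?_⟩)
      · simpa [A, flip] using hcover h i hi
      · simp [flip]
  have hle := (Finset.card_le_card hcov).trans ((Finset.card_union_le _ _).trans
    (Nat.add_le_add_left Finset.card_image_le _))
  have hlt : 2 * ∑ h, (T h).card < ∑ _h : Fin n → Bool, n := by
    rw [Finset.mul_sum]
    exact Finset.sum_lt_sum_of_nonempty Finset.univ_nonempty fun h _ => hT h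
  simp only [Finset.card_univ, Fintype.card_prod, Fintype.card_fin, Finset.sum_const,
    smul_eq_mul, hA] at hle hlt
  omega

lemma add_one_le_famTD_SigmaGVS_univ {n k : ℕ} (hk : 2 * k < n) (h0 : Fin n → Bool) :
    (k + 1 : ℕ∞) ≤ famTD Finset.univ h0 (SigmaGVS Finset.univ) := by
  refine add_one_le_famTD fun σ hσ => ?_
  by_contra! hteach
  choose S hS htS c hc using fun t =>
    (hteach t (Finset.mem_univ t)).exists_examples (Finset.mem_univ t)
  obtain ⟨t, i, hi, hi'⟩ := exists_notMem_of_two_mul_card_lt (fun t => (S t).image Prod.fst)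
    fun t => by have := (S t).card_image_le (f := Prod.fst); have := hS t; omega
  set t' := Function.update t i (!t i)
  have hagree : ∀ {u v : Fin n → Bool}, (∀ x, x ≠ i → u x = v x) →
      i ∉ (S v).image Prod.fst → ConsistentWith u (S v) := fun huv hv z hz => by
    rw [huv z.1 fun h => hv (Finset.mem_image.2 ⟨z, hz, h⟩)]
    exact htS _ z hz
  have htt' : t = t' := eq_of_mem_SigmaGVS_of_consistent hσ (hc t) (hc t')
    (hagree (fun x hx => (Function.update_of_ne hx _ _).symm) hi')
    (hagree (fun x hx => Function.update_of_ne hx _ _) hi)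
  simpa [t'] using congrFun htt' i

lemma two_le_famTD_SigmaLocal_univ {X : Type} [Fintype X] [DecidableEq X] [Nontrivial X]
    (h0 : X → Bool) : (2 : ℕ∞) ≤ famTD Finset.univ h0 (SigmaLocal Finset.univ) := by
  refine add_one_le_famTD (n := 1) fun σ ⟨_, g, hg⟩ => ?_
  obtain ⟨m, -, hmax⟩ := Finset.univ.exists_max_image (fun h => g h h0) Finset.univ_nonempty
  refine ⟨m, Finset.mem_univ m, ?_⟩
  rintro (⟨z, hz, hC⟩ | ⟨z, hz, hnext⟩)
  · obtain ⟨x, hx⟩ := exists_ne z.1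
    have hlt := (argminSet_eq_singleton_iff.1 hC).2 (Function.update m x (!m x))
      (by simp [ConsistentWith, Function.update_of_ne hx.symm, hz])
      (fun h => by simpa using congrFun h x)
    simp only [hg] at hlt
    exact hlt.not_ge (hmax _ (Finset.mem_univ _))
  · have hm : m ∈ verSpace Finset.univ {z} := by simp [ConsistentWith, hz]
    obtain ⟨c, hc⟩ := argminSet_nonempty ⟨m, hm⟩ h0 (σ := σ)
    exact hnext c hc

end FullClass

section BoolExample

/-- A perfect matching of the four hypotheses with the four labelled examples: the constant
hypotheses are taught at `false`, the other two at `true`. -/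
def boolTeacher (h : Bool → Bool) : Bool × Bool :=
  (h false != h true, h (h false != h true))

noncomputable def boolPref : Pref Bool :=
  natPref fun h' H' _ => if H' = verSpace Finset.univ {boolTeacher h'} then 0 else 1

lemma boolPref_mem_SigmaGVS : boolPref ∈ SigmaGVS Finset.univ := by
  refine ⟨?_, fun h' H' => if H' = verSpace Finset.univ {boolTeacher h'} then 0 else 1,
    fun h' H' h => by simp [boolPref, natPref]⟩
  simp only [CollusionFree, ConsistentWith, boolPref, argminSet_natPref]
  decide +kernel

lemma famTD_SigmaGVS_bool_le_one (h0 : Bool → Bool) :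
    famTD Finset.univ h0 (SigmaGVS Finset.univ) ≤ 1 := by
  refine famTD_le_of_mem boolPref_mem_SigmaGVS fun t _ => .inl ⟨boolTeacher t, rfl, ?_⟩
  revert t
  simp only [Cand, boolPref, argminSet_natPref]
  decide +kernel

end BoolExample

namespace FiveCube

def code (h : Fin 5 → Bool) : ℕ := Nat.ofDigits 2 (List.ofFn fun i => (h i).toNat)

def startRanking : List ℕ := [6, 15, 3, 26, 0, 24, 17, 29]

def stepRanking : List ℕ := [0, 8, 10, 14, 26, 12, 16, 2, 29, 17, 9, 4]

/-- Hypotheses are listed by `code`. At `0` the learner follows `startRanking`; elsewhere it ranks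
`h'` by the position of `h' xor h` in `stepRanking`, whose head makes it keep its current
hypothesis, and it never returns to `0`. `List.idxOf` gives unlisted codes the length of the
list, so they tie behind all listed ones. The rankings and the `teachingPairs` below were found
by computer search. -/
def score (h' h : Fin 5 → Bool) : ℕ :=
  if h = 0 then startRanking.idxOf (code h')
  else if h' = 0 then 32
  else stepRanking.idxOf (code fun i => xor (h' i) (h i))

noncomputable def pref : Pref (Fin 5) := natPref fun h' _ h => score h' h

lemma score_self_lt : ∀ a b : Fin 5 → Bool, a ≠ 0 → b ≠ a → score a a < score b a := by
  decide +kernel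

lemma score_lt_score_zero {b h : Fin 5 → Bool} (hh : h ≠ 0) (hb : b ≠ 0) :
    score b h < score 0 h := by
  simp only [score, hh, hb, if_false, if_true]
  exact List.idxOf_le_length.trans_lt (by decide)

lemma pref_mem_SigmaLocal : pref ∈ SigmaLocal Finset.univ := by
  refine ⟨collusionFree_of_local (g := fun h' h => score h' h) (fun _ _ _ => rfl)
    fun a h hha => ?_, _, fun _ _ _ => rfl⟩
  rcases eq_or_ne a 0 with rfl | ha
  · exact .inr fun b hb => by exact_mod_cast score_lt_score_zero hha hb
  · exact .inl fun b hb => by exact_mod_cast score_self_lt a b ha hb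

def teachingPairs : List (Fin 5 × Fin 5) :=
  [(1, 0), (0, 2), (3, 2), (2, 0), (3, 1), (0, 1), (0, 0), (0, 3), (0, 2), (2, 1), (1, 2),
   (2, 3), (0, 1), (3, 1), (0, 3), (0, 0), (4, 1), (1, 0), (2, 0), (4, 0), (4, 2), (0, 4),
   (1, 4), (2, 0), (1, 3), (2, 4), (4, 0), (1, 0), (0, 4), (1, 2), (3, 0), (3, 4)]

def teacher (t : Fin 5 → Bool) : (Fin 5 × Bool) × (Fin 5 × Bool) :=
  let p := teachingPairs.getD (code t) (0, 0)
  ((p.1, t p.1), (p.2, t p.2))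

lemma teacher_spec : ∀ t, ∀ c ∈ Cand pref Finset.univ 0 (teacher t).1,
    Cand pref (verSpace Finset.univ {(teacher t).1}) c (teacher t).2 = {t} := by
  simp only [Cand, pref, argminSet_natPref]
  decide +kernel

lemma famTD_SigmaLocal_le_two :
    famTD (Finset.univ : Finset (Fin 5 → Bool)) 0 (SigmaLocal Finset.univ) ≤ 2 :=
  famTD_le_of_mem pref_mem_SigmaLocal fun t _ =>
    .inr ⟨_, rfl, fun c hc => .inl ⟨_, rfl, teacher_spec t c hc⟩⟩

end FiveCube

/-- neither of `Σ_gvs` and `Σ_local` dominates the other. -/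
theorem gvs_local_incomparable :
    (∃ (X : Type) (_ : Fintype X) (Hc : Finset (X → Bool)) (h0 : X → Bool),
      h0 ∈ Hc ∧ famTD Hc h0 (SigmaGVS Hc) < famTD Hc h0 (SigmaLocal Hc)) ∧
    (∃ (X : Type) (_ : Fintype X) (Hc : Finset (X → Bool)) (h0 : X → Bool),
      h0 ∈ Hc ∧ famTD Hc h0 (SigmaLocal Hc) < famTD Hc h0 (SigmaGVS Hc)) := by
  refine ⟨⟨Bool, inferInstance, Finset.univ, fun _ => false, Finset.mem_univ _, ?_⟩,
    ⟨Fin 5, inferInstance, Finset.univ, 0, Finset.mem_univ _, ?_⟩⟩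
  · exact (famTD_SigmaGVS_bool_le_one _).trans_lt
      ((show (1 : ℕ∞) < 2 by norm_num).trans_le (two_le_famTD_SigmaLocal_univ _))
  · exact FiveCube.famTD_SigmaLocal_le_two.trans_lt
      ((show (2 : ℕ∞) < 2 + 1 by norm_num).trans_le
        (add_one_le_famTD_SigmaGVS_univ (show 2 * 2 < 5 by norm_num) 0))
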